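/- arXiv:1105.0934 — 4 statements merged into one kernel-verified Lean document; each statement's English description precedes it below -/
import Mathlib

section
/- Let h : ℝ^{n₁} × ℝ^{n₂} → ℝ ∪ {+∞} be a proper lower semicontinuous convex function such that the set N = {x₂ ∈ ℝ^{n₂} : h^∞(0, x₂) ≤ 0} is a linear subspace. Then the marginal function g(x₁) = inf_{x₂} h(x₁, x₂) is a lower semicontinuous convex function, the infimum is attained whenever g(x₁) < +∞, and g^∞(x₁) = inf_{x₂} h^∞(x₁, x₂). -/
noncomputable def recFn {E : Type*} [AddCommGroup E] [Module ℝ E]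
    (h : E → EReal) (xbar x : E) : EReal :=
  ⨆ l : {l : ℝ // 0 < l}, (((l : ℝ)⁻¹ : ℝ) : EReal) * (h (xbar + (l : ℝ) • x) - h xbar)

def EConvex {E : Type*} [AddCommGroup E] [Module ℝ E] (h : E → EReal) : Prop :=
  ∀ x y : E, ∀ a b : ℝ, 0 ≤ a → 0 ≤ b → a + b = 1 →
    h (a • x + b • y) ≤ (a : EReal) * h x + (b : EReal) * h y

/-!
Write `π((x₁, x₂), μ) = (x₁, μ)`. Up to closure, the epigraph of the marginal function `g` is the
image under `π` of the closed convex epigraph of `h`, and the hypothesis on `N` says that the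
recession directions of `epi h` lying in `ker π` form a subspace. Cutting `epi h` by a complement
of that subspace does not change its image and leaves no recession direction in `ker π`. For
such a set the part over a bounded set is bounded, since an unbounded closed convex set has a
nonzero recession direction. Hence its image is closed and the recession cone of the image is the
image of the recession cone. All four claims are read off from `epi g = π (epi h)` and
`0⁺ (epi g) = π (0⁺ (epi h))`.
-/

open Filter Topology Set Bornology

/-- The recession cone `0⁺S`. -/
def recCone {V : Type*} [AddCommGroup V] [Module ℝ V] (S : Set V) : Set V :=
  {d | ∀ c ∈ S, ∀ t : ℝ, 0 ≤ t → c + t • d ∈ S}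

section RecessionCone

variable {V : Type*} [AddCommGroup V] [Module ℝ V] {S : Set V} {d e : V}

lemma zero_mem_recCone (S : Set V) : (0 : V) ∈ recCone S := by
  intro c hc t _
  simpa using hc

lemma add_mem_recCone (hS : Convex ℝ S) (hd : d ∈ recCone S) (he : e ∈ recCone S) :
    d + e ∈ recCone S := by
  intro c hc t ht
  have hmid := hS (hd c hc (2 * t) (by positivity)) (he c hc (2 * t) (by positivity))
    (by norm_num : (0 : ℝ) ≤ 1 / 2) (by norm_num : (0 : ℝ) ≤ 1 / 2) (by norm_num)
  convert hmid using 1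
  module

lemma smul_mem_recCone (hd : d ∈ recCone S) {a : ℝ} (ha : 0 ≤ a) : a • d ∈ recCone S := by
  intro c hc t ht
  rw [smul_smul]
  exact hd c hc _ (mul_nonneg ht ha)

lemma image_recCone_subset {V' : Type*} [AddCommGroup V'] [Module ℝ V']
    (π : V →ₗ[ℝ] V') (S : Set V) : π '' recCone S ⊆ recCone (π '' S) := by
  rintro _ ⟨d, hd, rfl⟩ _ ⟨c, hc, rfl⟩ t ht
  exact ⟨c + t • d, hd c hc t ht, by simp⟩

end RecessionCone

section ClosedConvex

variable {V : Type*} [NormedAddCommGroup V] [NormedSpace ℝ V] {S C D : Set V} {c d : V}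

lemma isClosed_recCone (hS : IsClosed S) : IsClosed (recCone S) := by
  have : recCone S = ⋂ c ∈ S, ⋂ t ∈ Ici (0 : ℝ), (fun d => c + t • d) ⁻¹' S := by
    ext d
    simp [recCone]
  rw [this]
  exact isClosed_biInter fun c _ => isClosed_biInter fun t _ =>
    hS.preimage (continuous_const.add (continuous_const_smul t))

lemma mem_recCone_of_tendsto (hS : IsClosed S) (hconv : Convex ℝ S) {ι : Type*} {l : Filter ι}
    [l.NeBot] {p : ι → V} {r : ι → ℝ} (hp : ∀ᶠ i in l, p i ∈ S) (hr : Tendsto r l atTop)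
    (hd : Tendsto (fun i => (r i)⁻¹ • p i) l (𝓝 d)) : d ∈ recCone S := by
  intro c hc t ht
  have hlim : Tendsto (fun i => c + t • ((r i)⁻¹ • p i) - (t * (r i)⁻¹) • c) l
      (𝓝 (c + t • d - (t * 0) • c)) :=
    (tendsto_const_nhds.add (hd.const_smul t)).sub
      (((tendsto_inv_atTop_zero.comp hr).const_mul t).smul_const c)
  rw [mul_zero, zero_smul, sub_zero] at hlim
  refine hS.mem_of_tendsto hlim ?_
  filter_upwards [hp, hr.eventually_ge_atTop (max t 1)] with i hpi hri
  have hr0 : 0 < r i := lt_of_lt_of_le one_pos (le_of_max_le_right hri)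
  have hmem := hconv.add_smul_sub_mem hc hpi (t := t * (r i)⁻¹)
    ⟨by positivity, by rw [← div_eq_mul_inv, div_le_one hr0]; exact le_of_max_le_left hri⟩
  convert hmem using 1
  module

lemma mem_recCone_of_forall_add_smul_mem (hS : IsClosed S) (hconv : Convex ℝ S)
    (hray : ∀ t : ℝ, 0 ≤ t → c + t • d ∈ S) : d ∈ recCone S := by
  refine mem_recCone_of_tendsto hS hconv (l := atTop) (r := id)
    (eventually_ge_atTop 0 |>.mono hray) tendsto_id ?_
  have hlim : Tendsto (fun t : ℝ => t⁻¹ • c + d) atTop (𝓝 ((0 : ℝ) • c + d)) :=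
    (tendsto_inv_atTop_zero.smul_const c).add_const d
  rw [zero_smul, zero_add] at hlim
  refine hlim.congr' ?_
  filter_upwards [eventually_gt_atTop 0] with t ht
  simp [smul_add, smul_smul, ht.ne']

lemma recCone_subset_recCone (hC : IsClosed C) (hconv : Convex ℝ C) (hDC : D ⊆ C)
    (hD : D.Nonempty) : recCone D ⊆ recCone C := by
  obtain ⟨c, hc⟩ := hD
  exact fun d hd => mem_recCone_of_forall_add_smul_mem hC hconv fun t ht => hDC (hd c hc t ht)

lemma eq_zero_of_forall_add_smul_mem_of_isBounded (hS : IsBounded S)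
    (hray : ∀ t : ℝ, 0 ≤ t → c + t • d ∈ S) : d = 0 := by
  obtain ⟨R, hR⟩ := isBounded_iff_forall_norm_le.1 hS
  by_contra hd
  have hd' : 0 < ‖d‖ := norm_pos_iff.2 hd
  set t := (R + ‖c‖ + 1) / ‖d‖
  have ht : t * ‖d‖ = R + ‖c‖ + 1 := div_mul_cancel₀ _ hd'.ne'
  have hle : ‖t • d‖ ≤ ‖c + t • d‖ + ‖c‖ := by
    simpa using norm_sub_le (c + t • d) c
  have hcR : ‖c‖ ≤ R := by simpa using hR _ (hray 0 le_rfl)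
  have htn : 0 ≤ t := div_nonneg (by linarith [norm_nonneg c]) hd'.le
  rw [norm_smul, Real.norm_of_nonneg htn] at hle
  linarith [hR _ (hray t htn)]

lemma exists_ne_zero_mem_recCone [ProperSpace V] (hS : IsClosed S) (hconv : Convex ℝ S)
    (hunb : ¬ IsBounded S) : ∃ d ∈ recCone S, d ≠ 0 := by
  simp only [isBounded_iff_forall_norm_le, not_exists, not_forall, not_le] at hunb
  choose p hpS hp using fun n : ℕ => hunb n
  have hp0 : ∀ n, p n ≠ 0 := fun n => norm_pos_iff.1 ((Nat.cast_nonneg n).trans_lt (hp n))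
  obtain ⟨d, hd, φ, hφ, hlim⟩ := (isCompact_sphere (0 : V) 1).tendsto_subseq
    (x := fun n => ‖p n‖⁻¹ • p n) fun n => by simp [norm_smul, hp0 n]
  refine ⟨d, mem_recCone_of_tendsto hS hconv (p := p ∘ φ) (r := fun n => ‖p (φ n)‖)
    (Eventually.of_forall fun n => hpS _) ?_ hlim, ne_zero_of_mem_unit_sphere ⟨d, hd⟩⟩
  refine tendsto_atTop_mono (fun n => ?_) tendsto_natCast_atTop_atTop
  exact (Nat.cast_le.2 (hφ.id_le n)).trans (hp (φ n)).le

end ClosedConvex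

section LinearImage

variable {V V' : Type*} [NormedAddCommGroup V] [NormedSpace ℝ V] [FiniteDimensional ℝ V]
  [NormedAddCommGroup V'] [NormedSpace ℝ V'] (π : V →ₗ[ℝ] V') {C D : Set V}

lemma isBounded_inter_preimage_closedBall (hD : IsClosed D) (hconv : Convex ℝ D)
    (hker : ∀ z ∈ recCone D, π z = 0 → z = 0) (x : V') (R : ℝ) :
    IsBounded (D ∩ π ⁻¹' Metric.closedBall x R) := by
  by_contra hunb
  obtain ⟨c, hc⟩ : (D ∩ π ⁻¹' Metric.closedBall x R).Nonempty :=
    nonempty_iff_ne_empty.2 fun h => hunb (h ▸ isBounded_empty)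
  obtain ⟨d, hd, hd0⟩ := exists_ne_zero_mem_recCone
    (hD.inter (Metric.isClosed_closedBall.preimage π.continuous_of_finiteDimensional))
    (hconv.inter ((convex_closedBall x R).linear_preimage π)) hunb
  have hπd : π d = 0 := eq_zero_of_forall_add_smul_mem_of_isBounded Metric.isBounded_closedBall
    (c := π c) fun t ht => by simpa using (hd c hc t ht).2
  exact hd0 (hker d (recCone_subset_recCone hD hconv inter_subset_left ⟨c, hc⟩ hd) hπd)

lemma isClosed_image_of_recCone_ker_eq_zero (hD : IsClosed D) (hconv : Convex ℝ D)
    (hker : ∀ z ∈ recCone D, π z = 0 → z = 0) : IsClosed (π '' D) := by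
  refine isClosed_of_closure_subset fun x hx => ?_
  have hπ := π.continuous_of_finiteDimensional
  set K := D ∩ π ⁻¹' Metric.closedBall x 1
  have hK : IsCompact (π '' K) := (Metric.isCompact_of_isClosed_isBounded
    (hD.inter (Metric.isClosed_closedBall.preimage hπ))
    (isBounded_inter_preimage_closedBall π hD hconv hker x 1)).image hπ
  have hsub : Metric.ball x 1 ∩ π '' D ⊆ π '' K := by
    rintro _ ⟨hy, z, hz, rfl⟩
    exact ⟨z, ⟨hz, Metric.ball_subset_closedBall hy⟩, rfl⟩
  have hxK : x ∈ π '' K := hK.isClosed.closure_subset_iff.2 hsub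
    (Metric.isOpen_ball.inter_closure ⟨Metric.mem_ball_self one_pos, hx⟩)
  exact image_mono inter_subset_left hxK

/-- The direction is found as a recession direction of the part of `D` lying over the ray
`π c + ℝ≥0 • x`, which is unbounded. -/
lemma recCone_image_subset_of_recCone_ker_eq_zero (hD : IsClosed D) (hconv : Convex ℝ D)
    (hne : D.Nonempty) (hker : ∀ z ∈ recCone D, π z = 0 → z = 0) :
    recCone (π '' D) ⊆ π '' recCone D := by
  intro x hx
  obtain ⟨c, hc⟩ := hne
  by_cases hx0 : x = 0
  · exact ⟨0, zero_mem_recCone D, by simp [hx0]⟩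
  have hπ := π.continuous_of_finiteDimensional
  set R := (π c + ·) '' ((· • x) '' Ici (0 : ℝ))
  have hRclosed : IsClosed R :=
    (Homeomorph.addLeft (π c)).isClosedMap _ (isClosedMap_smul_left x _ isClosed_Ici)
  have hRconv : Convex ℝ R :=
    ((convex_Ici 0).linear_image (LinearMap.toSpanSingleton ℝ V' x)).translate (π c)
  set K := D ∩ π ⁻¹' R
  have hcK : c ∈ K := ⟨hc, 0, ⟨0, self_mem_Ici, zero_smul _ _⟩, add_zero _⟩
  have hunb : ¬ IsBounded K := fun hK => hx0 <|
    eq_zero_of_forall_add_smul_mem_of_isBounded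
      ((LinearMap.toContinuousLinearMap π).lipschitz.isBounded_image hK) fun t ht => by
        obtain ⟨z, hz, hzx⟩ := hx (π c) ⟨c, hc, rfl⟩ t ht
        exact ⟨z, ⟨hz, t • x, ⟨t, ht, rfl⟩, hzx.symm⟩, hzx⟩
  obtain ⟨d, hd, hd0⟩ := exists_ne_zero_mem_recCone (hD.inter (hRclosed.preimage hπ))
    (hconv.inter (hRconv.linear_preimage π)) hunb
  obtain ⟨_, ⟨s, hs, rfl⟩, hsd⟩ := (hd c hcK 1 zero_le_one).2
  have hπd : π d = s • x := by simpa using hsd.symm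
  have hdD : d ∈ recCone D := recCone_subset_recCone hD hconv inter_subset_left ⟨c, hcK⟩ hd
  have hs0 : s ≠ 0 := fun h0 => hd0 (hker d hdD (by simp [hπd, h0]))
  refine ⟨s⁻¹ • d, smul_mem_recCone hdD (inv_nonneg.2 hs), ?_⟩
  rw [map_smul, hπd, smul_smul, inv_mul_cancel₀ hs0, one_smul]

/-- Cutting `C` by a complement of the subspace `{z ∈ 0⁺C | π z = 0}` does not change its image
and leaves no nonzero recession direction in `ker π`. -/
lemma exists_subset_image_eq_of_recCone_ker (hC : IsClosed C) (hconv : Convex ℝ C)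
    (hne : C.Nonempty) (hker : ∀ z ∈ recCone C, π z = 0 → -z ∈ recCone C) :
    ∃ D ⊆ C, IsClosed D ∧ Convex ℝ D ∧ D.Nonempty ∧ π '' D = π '' C ∧
      ∀ z ∈ recCone D, π z = 0 → z = 0 := by
  let W : Submodule ℝ V :=
    { carrier := {z | z ∈ recCone C ∧ π z = 0}
      add_mem' := fun ⟨ha, ha'⟩ ⟨hb, hb'⟩ => ⟨add_mem_recCone hconv ha hb, by simp [ha', hb']⟩
      zero_mem' := ⟨zero_mem_recCone C, map_zero π⟩
      smul_mem' := by
        rintro a z ⟨hz, hz'⟩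
        refine ⟨?_, by simp [hz']⟩
        rcases le_total 0 a with ha | ha
        · exact smul_mem_recCone hz ha
        · simpa using smul_mem_recCone (hker z hz hz') (neg_nonneg.2 ha) }
  obtain ⟨U, hWU⟩ := Submodule.exists_isCompl W
  have hshift : ∀ z ∈ C, ∃ u ∈ C ∩ U, π u = π z := by
    intro z hz
    obtain ⟨w, hw, u, hu, rfl⟩ :=
      Submodule.mem_sup.1 (hWU.sup_eq_top ▸ Submodule.mem_top : z ∈ W ⊔ U)
    refine ⟨u, ⟨?_, hu⟩, by simp [hw.2]⟩
    simpa using hker w hw.1 hw.2 (w + u) hz 1 zero_le_one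
  obtain ⟨c, hc⟩ := hne
  obtain ⟨c', hc', -⟩ := hshift c hc
  refine ⟨C ∩ U, inter_subset_left, hC.inter U.closed_of_finiteDimensional,
    hconv.inter U.convex, ⟨c', hc'⟩, ?_, ?_⟩
  · refine (image_mono inter_subset_left).antisymm ?_
    rintro _ ⟨z, hz, rfl⟩
    exact hshift z hz
  · intro z hz hπz
    have hzU : z ∈ U := by simpa using U.sub_mem (hz c' hc' 1 zero_le_one).2 hc'.2
    have hzW : z ∈ W :=
      ⟨recCone_subset_recCone hC hconv inter_subset_left ⟨c', hc'⟩ hz, hπz⟩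
    exact Submodule.disjoint_def.1 hWU.disjoint z hzW hzU

/-- Rockafellar, Theorem 9.1. -/
theorem isClosed_image_of_recCone_ker (hC : IsClosed C) (hconv : Convex ℝ C)
    (hker : ∀ z ∈ recCone C, π z = 0 → -z ∈ recCone C) : IsClosed (π '' C) := by
  rcases C.eq_empty_or_nonempty with rfl | hne
  · simp
  obtain ⟨D, -, hD, hDconv, -, hDC, hD0⟩ :=
    exists_subset_image_eq_of_recCone_ker π hC hconv hne hker
  exact hDC ▸ isClosed_image_of_recCone_ker_eq_zero π hD hDconv hD0

theorem recCone_image_of_recCone_ker (hC : IsClosed C) (hconv : Convex ℝ C) (hne : C.Nonempty)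
    (hker : ∀ z ∈ recCone C, π z = 0 → -z ∈ recCone C) :
    recCone (π '' C) = π '' recCone C := by
  obtain ⟨D, hDC, hD, hDconv, hDne, hπD, hD0⟩ :=
    exists_subset_image_eq_of_recCone_ker π hC hconv hne hker
  refine (image_recCone_subset π C).antisymm' ?_
  rw [← hπD]
  exact (recCone_image_subset_of_recCone_ker_eq_zero π hD hDconv hDne hD0).trans
    (image_mono (recCone_subset_recCone hC hconv hDC hDne))

end LinearImage

lemma iInf_le_coe_iff_of_isClosed {ι : Type*} {F : ι → EReal}
    (hF : IsClosed {μ : ℝ | ∃ i, F i ≤ μ}) (μ : ℝ) : ⨅ i, F i ≤ μ ↔ ∃ i, F i ≤ μ := by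
  refine ⟨fun h => ?_, fun ⟨i, hi⟩ => iInf_le_of_le i hi⟩
  have hsub : Ioi μ ⊆ {μ : ℝ | ∃ i, F i ≤ μ} := fun s hs =>
    let ⟨i, hi⟩ := iInf_lt_iff.1 (h.trans_lt (EReal.coe_lt_coe_iff.2 hs))
    ⟨i, hi.le⟩
  exact hF.closure_subset_iff.2 hsub (closure_Ioi μ ▸ self_mem_Ici)

lemma EReal.eq_of_forall_le_coe_iff {a b : EReal} (h : ∀ μ : ℝ, a ≤ μ ↔ b ≤ μ) : a = b :=
  le_antisymm (EReal.le_of_forall_lt_iff_le.1 fun μ hμ => (h μ).2 hμ.le)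
    (EReal.le_of_forall_lt_iff_le.1 fun μ hμ => (h μ).1 hμ.le)

section Epigraph

variable {X : Type*} {f : X → EReal}

/-- `epi f`, with real heights only, so that it lives in the vector space `X × ℝ`. -/
def realEpigraph (f : X → EReal) : Set (X × ℝ) := {p | f p.1 ≤ p.2}

@[simp]
lemma mem_realEpigraph {p : X × ℝ} : p ∈ realEpigraph f ↔ f p.1 ≤ p.2 := Iff.rfl

lemma LowerSemicontinuous.isClosed_realEpigraph [TopologicalSpace X]
    (hf : LowerSemicontinuous f) : IsClosed (realEpigraph f) :=
  hf.isClosed_epigraph.preimage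
    (continuous_fst.prodMk (continuous_coe_real_ereal.comp continuous_snd))

lemma lowerSemicontinuous_of_isClosed_realEpigraph [TopologicalSpace X]
    (hf : IsClosed (realEpigraph f)) : LowerSemicontinuous f := by
  refine lowerSemicontinuous_iff_isClosed_preimage.2 fun y => ?_
  have : f ⁻¹' Iic y = ⋂ (μ : ℝ) (_ : y < μ), (fun x => (x, μ)) ⁻¹' realEpigraph f := by
    ext x
    simp [EReal.le_of_forall_lt_iff_le]
  rw [this]
  exact isClosed_biInter fun μ _ => hf.preimage (Continuous.prodMk_left μ)

variable [AddCommGroup X] [Module ℝ X]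

lemma EConvex.convex_realEpigraph (hf : EConvex f) : Convex ℝ (realEpigraph f) := by
  rintro ⟨x, μ⟩ hx ⟨y, ν⟩ hy a b ha hb hab
  calc f (a • x + b • y) ≤ a * f x + b * f y := hf x y a b ha hb hab
    _ ≤ a * μ + b * ν := add_le_add (mul_le_mul_of_nonneg_left hx (by exact_mod_cast ha))
        (mul_le_mul_of_nonneg_left hy (by exact_mod_cast hb))
    _ = ((a • (x, μ) + b • (y, ν) : X × ℝ).2 : EReal) := by simp

/-- `⊥` is excluded since `⊥ + ⊤ = ⊥` in `EReal`. -/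
lemma EConvex.of_convex_realEpigraph (hbot : ∀ x, f x ≠ ⊥) (hf : Convex ℝ (realEpigraph f)) :
    EConvex f := by
  intro x y a b ha hb hab
  rcases ha.eq_or_lt with rfl | ha
  · obtain rfl : b = 1 := by simpa using hab
    simp
  rcases hb.eq_or_lt with rfl | hb
  · obtain rfl : a = 1 := by simpa using hab
    simp
  have hmul_ne_bot : ∀ {c : ℝ} (z : X), 0 < c → (c : EReal) * f z ≠ ⊥ := fun {c} z hc =>
    (EReal.mul_ne_bot _ _).2 ⟨.inl (EReal.coe_ne_bot c), .inr (hbot z),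
      .inl (EReal.coe_ne_top c), .inl (by exact_mod_cast hc.le)⟩
  by_cases hx : f x = ⊤
  · simp [hx, EReal.coe_mul_top_of_pos ha, EReal.top_add_of_ne_bot (hmul_ne_bot y hb)]
  by_cases hy : f y = ⊤
  · simp [hy, EReal.coe_mul_top_of_pos hb, EReal.add_top_of_ne_bot (hmul_ne_bot x ha)]
  obtain ⟨u, hu⟩ : ∃ u : ℝ, f x = u := ⟨_, (EReal.coe_toReal hx (hbot x)).symm⟩
  obtain ⟨v, hv⟩ : ∃ v : ℝ, f y = v := ⟨_, (EReal.coe_toReal hy (hbot y)).symm⟩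
  have hmem := hf (x := (x, u)) (y := (y, v)) hu.le hv.le ha.le hb.le hab
  rw [hu, hv]
  simpa using hmem

lemma recFn_le_coe_iff {b d : X} {r : ℝ} (hb : f b = r) (μ : ℝ) :
    recFn f b d ≤ μ ↔ ∀ l : ℝ, 0 < l → f (b + l • d) ≤ ↑(r + l * μ) := by
  simp only [recFn, iSup_le_iff, Subtype.forall, hb]
  refine forall₂_congr fun l hl => ?_
  rw [mul_comm, EReal.coe_inv, ← div_eq_mul_inv, EReal.div_le_iff_le_mul (by exact_mod_cast hl)
    (EReal.coe_ne_top l), EReal.sub_le_iff_le_add (.inl (EReal.coe_ne_bot r))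
    (.inl (EReal.coe_ne_top r))]
  push_cast
  rw [add_comm (r : EReal)]

lemma zero_one_mem_recCone_realEpigraph (f : X → EReal) :
    ((0 : X), (1 : ℝ)) ∈ recCone (realEpigraph f) := by
  rintro ⟨x, μ⟩ hx t ht
  simpa using hx.trans (EReal.coe_le_coe_iff.2 (le_add_of_nonneg_right ht))

end Epigraph

lemma mem_recCone_realEpigraph_iff {X : Type*} [NormedAddCommGroup X] [NormedSpace ℝ X]
    {f : X → EReal} (hC : IsClosed (realEpigraph f)) (hconv : Convex ℝ (realEpigraph f))
    {b : X} {r : ℝ} (hb : f b = r) (d : X) (μ : ℝ) :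
    (d, μ) ∈ recCone (realEpigraph f) ↔ recFn f b d ≤ μ := by
  rw [recFn_le_coe_iff hb]
  refine ⟨fun H l hl => by simpa using H (b, r) hb.le l hl.le, fun H => ?_⟩
  refine mem_recCone_of_forall_add_smul_mem hC hconv (c := (b, r)) fun t ht => ?_
  rcases ht.eq_or_lt with rfl | ht
  · simpa using hb.le
  · simpa using H t ht

section Marginal

variable {E₁ E₂ : Type*} [NormedAddCommGroup E₁] [NormedSpace ℝ E₁]
  [NormedAddCommGroup E₂] [NormedSpace ℝ E₂] {h : E₁ × E₂ → EReal}

variable (E₁ E₂) in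
def marginalProj : (E₁ × E₂) × ℝ →ₗ[ℝ] E₁ × ℝ := (LinearMap.fst ℝ E₁ E₂).prodMap LinearMap.id

@[simp]
lemma mem_image_marginalProj {S : Set ((E₁ × E₂) × ℝ)} {x : E₁} {μ : ℝ} :
    (x, μ) ∈ marginalProj E₁ E₂ '' S ↔ ∃ y, ((x, y), μ) ∈ S := by
  simp [marginalProj]

lemma neg_mem_recCone_of_marginalProj_eq_zero (hC : IsClosed (realEpigraph h))
    (hconv : Convex ℝ (realEpigraph h)) {b : E₁ × E₂} {r : ℝ} (hb : h b = r)
    (hsym : ∀ y, recFn h b (0, y) ≤ 0 → recFn h b (0, -y) ≤ 0) :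
    ∀ z ∈ recCone (realEpigraph h), marginalProj E₁ E₂ z = 0 → -z ∈ recCone (realEpigraph h) := by
  rintro ⟨⟨x, y⟩, μ⟩ hz hπz
  obtain ⟨rfl, rfl⟩ : x = 0 ∧ μ = 0 := by simpa [marginalProj] using hπz
  rw [mem_recCone_realEpigraph_iff hC hconv hb] at hz
  have := hsym y (by exact_mod_cast hz)
  simpa [mem_recCone_realEpigraph_iff hC hconv hb] using this

variable [FiniteDimensional ℝ E₁] [FiniteDimensional ℝ E₂]

lemma marginal_le_coe_iff (hC : IsClosed (realEpigraph h)) (hconv : Convex ℝ (realEpigraph h))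
    (hker : ∀ z ∈ recCone (realEpigraph h), marginalProj E₁ E₂ z = 0 →
      -z ∈ recCone (realEpigraph h)) (x : E₁) (μ : ℝ) :
    ⨅ y, h (x, y) ≤ μ ↔ ∃ y, h (x, y) ≤ μ := by
  refine iInf_le_coe_iff_of_isClosed ?_ μ
  convert (isClosed_image_of_recCone_ker _ hC hconv hker).preimage (Continuous.prodMk_right x)
    using 1
  ext μ
  rw [mem_preimage, mem_image_marginalProj]
  rfl

lemma realEpigraph_marginal (hC : IsClosed (realEpigraph h)) (hconv : Convex ℝ (realEpigraph h))
    (hker : ∀ z ∈ recCone (realEpigraph h), marginalProj E₁ E₂ z = 0 →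
      -z ∈ recCone (realEpigraph h)) :
    realEpigraph (fun x => ⨅ y, h (x, y)) = marginalProj E₁ E₂ '' realEpigraph h := by
  ext ⟨x, μ⟩
  rw [mem_realEpigraph, mem_image_marginalProj, marginal_le_coe_iff hC hconv hker]
  rfl

lemma recCone_realEpigraph_marginal (hC : IsClosed (realEpigraph h))
    (hconv : Convex ℝ (realEpigraph h)) (hne : (realEpigraph h).Nonempty)
    (hker : ∀ z ∈ recCone (realEpigraph h), marginalProj E₁ E₂ z = 0 →
      -z ∈ recCone (realEpigraph h)) :
    recCone (realEpigraph fun x => ⨅ y, h (x, y)) =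
      marginalProj E₁ E₂ '' recCone (realEpigraph h) := by
  rw [realEpigraph_marginal hC hconv hker]
  exact recCone_image_of_recCone_ker _ hC hconv hne hker

/-- Otherwise `(0, -1)` is a recession direction of the epigraph of the marginal function;
lifting it to `epi h` and correcting by a direction in the kernel makes `((0, 0), -1)` a recession
direction of `epi h`, which is impossible where `h` is finite. -/
lemma marginal_ne_bot (hC : IsClosed (realEpigraph h)) (hconv : Convex ℝ (realEpigraph h))
    (hker : ∀ z ∈ recCone (realEpigraph h), marginalProj E₁ E₂ z = 0 →
      -z ∈ recCone (realEpigraph h)) {b : E₁ × E₂} {r : ℝ} (hb : h b = r) (x : E₁) :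
    ⨅ y, h (x, y) ≠ ⊥ := by
  intro hbot
  have hepi := realEpigraph_marginal hC hconv hker
  have hdown : ((0 : E₁), (-1 : ℝ)) ∈ recCone (realEpigraph fun x => ⨅ y, h (x, y)) := by
    refine mem_recCone_of_forall_add_smul_mem (c := (x, 0))
      (hepi ▸ isClosed_image_of_recCone_ker _ hC hconv hker) (hepi ▸ hconv.linear_image _)
      fun t _ => ?_
    simp [hbot]
  rw [recCone_realEpigraph_marginal hC hconv ⟨(b, r), hb.le⟩ hker] at hdown
  obtain ⟨z, hz, hπz⟩ := hdown
  have hneg := hker _ (add_mem_recCone hconv hz (zero_one_mem_recCone_realEpigraph h))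
    (by rw [map_add, hπz]; simp [marginalProj])
  have hdown' : ((0 : E₁ × E₂), (-1 : ℝ)) ∈ recCone (realEpigraph h) := by
    simpa using add_mem_recCone hconv hz hneg
  have : h b ≤ ↑r + -1 := by simpa using hdown' (b, r) hb.le 1 zero_le_one
  rw [hb, ← EReal.coe_one, ← EReal.coe_neg, ← EReal.coe_add, EReal.coe_le_coe_iff] at this
  linarith

lemma recFn_marginal (hC : IsClosed (realEpigraph h)) (hconv : Convex ℝ (realEpigraph h))
    (hker : ∀ z ∈ recCone (realEpigraph h), marginalProj E₁ E₂ z = 0 →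
      -z ∈ recCone (realEpigraph h)) {b : E₁ × E₂} {r : ℝ} (hb : h b = r) (x : E₁) :
    recFn (fun x => ⨅ y, h (x, y)) b.1 x = ⨅ y, recFn h b (x, y) := by
  set g := fun x => ⨅ y, h (x, y)
  have hepi := realEpigraph_marginal hC hconv hker
  have hgC : IsClosed (realEpigraph g) := hepi ▸ isClosed_image_of_recCone_ker _ hC hconv hker
  have hgconv : Convex ℝ (realEpigraph g) := hepi ▸ hconv.linear_image _
  have hgb : g b.1 = (g b.1).toReal := (EReal.coe_toReal
    (ne_top_of_le_ne_top (hb ▸ EReal.coe_ne_top r) (iInf_le _ b.2))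
    (marginal_ne_bot hC hconv hker hb b.1)).symm
  have hsec : ∀ μ : ℝ, recFn g b.1 x ≤ μ ↔ ∃ y, recFn h b (x, y) ≤ μ := fun μ => by
    rw [← mem_recCone_realEpigraph_iff hgC hgconv hgb,
      recCone_realEpigraph_marginal hC hconv ⟨(b, r), hb.le⟩ hker, mem_image_marginalProj]
    simp only [mem_recCone_realEpigraph_iff hC hconv hb]
  have hclosed : IsClosed {μ : ℝ | ∃ y, recFn h b (x, y) ≤ μ} := by
    simp_rw [← hsec, ← mem_recCone_realEpigraph_iff hgC hgconv hgb]
    exact (isClosed_recCone hgC).preimage (Continuous.prodMk_right x)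
  refine EReal.eq_of_forall_le_coe_iff fun μ => ?_
  rw [hsec, iInf_le_coe_iff_of_isClosed hclosed]

end Marginal

/-- if `N = {x₂ : h^∞(0,x₂) ≤ 0}` is a linear subspace, then the marginal
function `g(x₁) = inf_{x₂} h(x₁,x₂)` is lsc and convex, the infimum is attained whenever
`g(x₁) < +∞`, and `g^∞(x₁) = inf_{x₂} h^∞(x₁,x₂)`. -/
theorem stmt2 (n₁ n₂ : ℕ)
    (h : (Fin n₁ → ℝ) × (Fin n₂ → ℝ) → EReal)
    (hconv : EConvex h) (hlsc : LowerSemicontinuous h)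
    (hproper : (∀ p, h p ≠ ⊥) ∧ ∃ p, h p ≠ ⊤)
    (pbar : (Fin n₁ → ℝ) × (Fin n₂ → ℝ)) (hpbar : h pbar ≠ ⊤)
    (hN : ∃ W : Submodule ℝ (Fin n₂ → ℝ),
      {x₂ : Fin n₂ → ℝ | recFn h pbar (0, x₂) ≤ 0} = (W : Set (Fin n₂ → ℝ))) :
    LowerSemicontinuous (fun x₁ : Fin n₁ → ℝ => ⨅ x₂ : Fin n₂ → ℝ, h (x₁, x₂)) ∧
    EConvex (fun x₁ : Fin n₁ → ℝ => ⨅ x₂ : Fin n₂ → ℝ, h (x₁, x₂)) ∧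
    (∀ x₁ : Fin n₁ → ℝ, (⨅ x₂ : Fin n₂ → ℝ, h (x₁, x₂)) ≠ ⊤ →
      ∃ x₂ : Fin n₂ → ℝ, h (x₁, x₂) = ⨅ x₂' : Fin n₂ → ℝ, h (x₁, x₂')) ∧
    (∀ x₁ : Fin n₁ → ℝ,
      recFn (fun x₁' : Fin n₁ → ℝ => ⨅ x₂ : Fin n₂ → ℝ, h (x₁', x₂)) pbar.1 x₁
        = ⨅ x₂ : Fin n₂ → ℝ, recFn h pbar (x₁, x₂)) := by
  obtain ⟨W, hW⟩ := hN
  obtain ⟨r, hr⟩ : ∃ r : ℝ, h pbar = r := ⟨_, (EReal.coe_toReal hpbar (hproper.1 pbar)).symm⟩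
  have hC := hlsc.isClosed_realEpigraph
  have hCconv := hconv.convex_realEpigraph
  have hker := neg_mem_recCone_of_marginalProj_eq_zero hC hCconv hr fun y hy => by
    have hyW : y ∈ W := by rw [← SetLike.mem_coe, ← hW]; exact hy
    have hnegW := neg_mem hyW
    rwa [← SetLike.mem_coe, ← hW] at hnegW
  have hepi := realEpigraph_marginal hC hCconv hker
  have hbot := marginal_ne_bot hC hCconv hker hr
  refine ⟨lowerSemicontinuous_of_isClosed_realEpigraph
      (hepi ▸ isClosed_image_of_recCone_ker _ hC hCconv hker),
    EConvex.of_convex_realEpigraph hbot (hepi ▸ hCconv.linear_image _),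
    fun x₁ hx₁ => ?_, recFn_marginal hC hCconv hker hr⟩
  have hg := EReal.coe_toReal hx₁ (hbot x₁)
  obtain ⟨x₂, hx₂⟩ := (marginal_le_coe_iff hC hCconv hker x₁ _).1 hg.ge
  exact ⟨x₂, le_antisymm (hx₂.trans_eq hg) (iInf_le _ x₂)⟩
end

section
/- Let h : ℝ^{n₁} × ℝ^{n₂} → ℝ ∪ {+∞} be a proper lower semicontinuous convex function and let N = {x₂ : h^∞(0, x₂) ≤ 0} be a linear subspace. If the infimum inf_{x₂} h(x₁, x₂) is attained at some point, then it is also attained at a point x₂ belonging to the orthogonal complement N^⊥, and the value h(x₁, x₂) is unchanged when x₂ is replaced by its orthogonal projection onto N^⊥. -/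
/-! If `recFn h pbar d ≤ 0`, then `h` does not increase along the ray `pbar + t • d`. Convexity and
lower semicontinuity propagate this to every point: `x + d` is the limit as `s → 0⁺` of
`(1 - s) • x + s • (pbar + s⁻¹ • d)`, where `h ≤ (1 - s) * h x + s * h pbar`. As `W` is closed under
negation, `h` is invariant under translation by `{0} × W`, so `h (x₁, ·)` factors through the
orthogonal projection onto `Wᗮ`, which therefore maps a minimiser to a minimiser. -/

open Filter Topology

theorem LowerSemicontinuousAt.le_of_tendsto {α β γ : Type*} [TopologicalSpace α]
    [CompleteLinearOrder γ] [TopologicalSpace γ] [OrderTopology γ]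
    {f : α → γ} {a : α} (hf : LowerSemicontinuousAt f a)
    {F : Filter β} [F.NeBot] {u : β → α} (hu : Tendsto u F (𝓝 a))
    {g : β → γ} {c : γ} (hg : Tendsto g F (𝓝 c)) (hle : ∀ᶠ t in F, f (u t) ≤ g t) :
    f a ≤ c :=
  calc f a ≤ liminf f (𝓝 a) := hf.le_liminf
    _ ≤ liminf f (map u F) := liminf_le_liminf_of_le hu
    _ = liminf (f ∘ u) F := (liminf_comp f u F).symm
    _ ≤ liminf g F := liminf_le_liminf hle
    _ = c := hg.liminf_eq

section

variable {E : Type*} [AddCommGroup E] [Module ℝ E] {h : E → EReal}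

theorem apply_add_smul_le_of_recFn_nonpos {xbar d : E} (hrec : recFn h xbar d ≤ 0)
    {t : ℝ} (ht : 0 < t) : h (xbar + t • d) ≤ h xbar := by
  have hquot : ((t⁻¹ : ℝ) : EReal) * (h (xbar + t • d) - h xbar) ≤ 0 :=
    (le_iSup (fun s : {s : ℝ // 0 < s} => ((s⁻¹ : ℝ) : EReal) *
      (h (xbar + (s : ℝ) • d) - h xbar)) ⟨t, ht⟩).trans hrec
  have htinv : (0 : EReal) < ((t⁻¹ : ℝ) : EReal) := by exact_mod_cast inv_pos.mpr ht
  rcases EReal.mul_nonpos_iff.mp hquot with ⟨-, hsub⟩ | ⟨hneg, -⟩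
  · exact EReal.sub_nonpos.mp hsub
  · exact absurd hneg htinv.not_ge

variable [TopologicalSpace E] [ContinuousAdd E] [ContinuousSMul ℝ E]

theorem EConvex.apply_add_le_of_forall_apply_add_smul_le {xbar d : E} (hconv : EConvex h)
    (hlsc : LowerSemicontinuous h) (hbot : ∀ p, h p ≠ ⊥) (hxbar : h xbar ≠ ⊤)
    (hray : ∀ t : ℝ, 0 < t → h (xbar + t • d) ≤ h xbar) (x : E) : h (x + d) ≤ h x := by
  rcases eq_or_ne (h x) ⊤ with hx | hx
  · simp [hx]
  lift h x to ℝ using ⟨hx, hbot x⟩ with a ha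
  lift h xbar to ℝ using ⟨hxbar, hbot xbar⟩ with b hb
  have hsegment : Tendsto (fun s : ℝ => x + d + s • (xbar - x)) (𝓝[>] 0) (𝓝 (x + d)) := by
    have : Continuous fun s : ℝ => x + d + s • (xbar - x) := by fun_prop
    simpa using this.tendsto' 0 _ (by simp) |>.mono_left nhdsWithin_le_nhds
  have hchord : Tendsto (fun s : ℝ => (((1 - s) * a + s * b : ℝ) : EReal)) (𝓝[>] 0) (𝓝 a) := by
    have : Continuous fun s : ℝ => (((1 - s) * a + s * b : ℝ) : EReal) :=
      continuous_coe_real_ereal.comp (by fun_prop)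
    simpa using this.tendsto' 0 _ (by simp) |>.mono_left nhdsWithin_le_nhds
  refine (hlsc.lowerSemicontinuousAt (x + d)).le_of_tendsto hsegment hchord ?_
  filter_upwards [Ioo_mem_nhdsGT one_pos] with s ⟨hs0, hs1⟩
  have hcomb : (1 - s) • x + s • (xbar + s⁻¹ • d) = x + d + s • (xbar - x) := by
    rw [smul_add, smul_smul, mul_inv_cancel₀ hs0.ne', one_smul]
    module
  calc h (x + d + s • (xbar - x))
      ≤ ((1 - s : ℝ) : EReal) * a + (s : EReal) * h (xbar + s⁻¹ • d) := by
        have := hconv x (xbar + s⁻¹ • d) (1 - s) s (by linarith) hs0.le (by ring)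
        rwa [hcomb, ← ha] at this
    _ ≤ ((1 - s : ℝ) : EReal) * a + (s : EReal) * b := by
        gcongr
        exact hb ▸ hray _ (inv_pos.mpr hs0)
    _ = (((1 - s) * a + s * b : ℝ) : EReal) := by norm_cast

theorem EConvex.apply_add_eq_of_recFn_nonpos {xbar d : E} (hconv : EConvex h)
    (hlsc : LowerSemicontinuous h) (hbot : ∀ p, h p ≠ ⊥) (hxbar : h xbar ≠ ⊤)
    (hd : recFn h xbar d ≤ 0) (hnd : recFn h xbar (-d) ≤ 0) (x : E) : h (x + d) = h x := by
  have hdesc : ∀ v, recFn h xbar v ≤ 0 → ∀ y, h (y + v) ≤ h y := fun v hv =>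
    hconv.apply_add_le_of_forall_apply_add_smul_le hlsc hbot hxbar
      fun _ ht => apply_add_smul_le_of_recFn_nonpos hv ht
  refine (hdesc d hd x).antisymm ?_
  simpa using hdesc (-d) hnd (x + d)

end

theorem Submodule.apply_orthogonalProjectionOnto_orthogonal {F α : Type*}
    [NormedAddCommGroup F] [InnerProductSpace ℝ F] (W : Submodule ℝ F) [W.HasOrthogonalProjection]
    {f : F → α} (hf : ∀ w ∈ W, ∀ x, f (x + w) = f x) (x : F) :
    f (Wᗮ.orthogonalProjectionOnto x) = f x := by
  have hw : x - Wᗮ.orthogonalProjectionOnto x ∈ W := by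
    have := Wᗮ.sub_starProjection_mem_orthogonal x
    rwa [W.orthogonal_orthogonal] at this
  simpa only [add_sub_cancel] using (hf _ hw (Wᗮ.orthogonalProjectionOnto x)).symm

/-- if `N = {x₂ : h^∞(0,x₂) ≤ 0}` is a linear subspace `W` and the infimum
`inf_{x₂} h(x₁,x₂)` is attained, then it is attained at some `x₂ ∈ W^⊥`, and the value
of `h(x₁,·)` is unchanged under orthogonal projection onto `W^⊥`. -/
theorem stmt3 (n₁ n₂ : ℕ)
    (h : (Fin n₁ → ℝ) × EuclideanSpace ℝ (Fin n₂) → EReal)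
    (hconv : EConvex h) (hlsc : LowerSemicontinuous h)
    (hproper : (∀ p, h p ≠ ⊥) ∧ ∃ p, h p ≠ ⊤)
    (pbar : (Fin n₁ → ℝ) × EuclideanSpace ℝ (Fin n₂)) (hpbar : h pbar ≠ ⊤)
    (W : Submodule ℝ (EuclideanSpace ℝ (Fin n₂)))
    (hN : {x₂ : EuclideanSpace ℝ (Fin n₂) | recFn h pbar (0, x₂) ≤ 0}
        = (W : Set (EuclideanSpace ℝ (Fin n₂))))
    (x₁ : Fin n₁ → ℝ)
    (hatt : ∃ x₂ : EuclideanSpace ℝ (Fin n₂),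
      h (x₁, x₂) = ⨅ x₂' : EuclideanSpace ℝ (Fin n₂), h (x₁, x₂')) :
    (∃ x₂ : EuclideanSpace ℝ (Fin n₂), x₂ ∈ Wᗮ ∧
      h (x₁, x₂) = ⨅ x₂' : EuclideanSpace ℝ (Fin n₂), h (x₁, x₂')) ∧
    (∀ x₂ : EuclideanSpace ℝ (Fin n₂),
      h (x₁, x₂) = h (x₁, (Wᗮ.orthogonalProjectionOnto x₂ : EuclideanSpace ℝ (Fin n₂)))) := by
  have hrec : ∀ w ∈ W, recFn h pbar (0, w) ≤ 0 := fun w hw => (Set.ext_iff.mp hN w).mpr hw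
  have hinvariant : ∀ w ∈ W, ∀ x₂, h (x₁, x₂ + w) = h (x₁, x₂) := fun w hw x₂ => by
    simpa using hconv.apply_add_eq_of_recFn_nonpos hlsc hproper.1 hpbar (hrec w hw)
      (by simpa using hrec (-w) (W.neg_mem hw)) (x₁, x₂)
  have hproj : ∀ x₂, h (x₁, x₂) = h (x₁, (Wᗮ.orthogonalProjectionOnto x₂ : _)) := fun x₂ =>
    (W.apply_orthogonalProjectionOnto_orthogonal (f := fun y => h (x₁, y)) hinvariant x₂).symm
  obtain ⟨x₂, hmin⟩ := hatt
  exact ⟨⟨_, Subtype.coe_prop _, hproj x₂ ▸ hmin⟩, hproj⟩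
end

section
/- Let (Ω, ℱ, P) be a probability space and (x^ν) a sequence of ℝ^n-valued measurable functions with sup_ν |x^ν(ω)| < ∞ almost surely. Then there exists a sequence x̄^ν, with each x̄^ν a (finite) convex combination of {x^μ : μ ≥ ν}, converging almost surely to a measurable ℝ^n-valued function. -/
/-!
Dividing by the positive measurable function `1 + sup_ν ‖x^ν‖`, which commutes with convex
combinations, makes the sequence uniformly bounded, and a linear isomorphism with a Euclidean space
moves it into a Hilbert space; there it is bounded in `L²`. Pick for every `ν` a convex combination
of the tail `{y^μ : μ ≥ ν}` whose `L²` norm is within `1/(ν+1)` of the least possible one. These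
least norms increase with `ν` and are bounded, so by the parallelogram law the chosen combinations
form a Cauchy sequence. Its `L²` limit is an almost sure limit along a subsequence, and a
subsequence of forward convex combinations is again one.
-/

open MeasureTheory Filter Topology Finsupp

structure IsForwardConvexWeights (ν : ℕ) (a : ℕ →₀ ℝ) : Prop where
  nonneg : ∀ k, 0 ≤ a k
  eq_zero_of_lt : ∀ k < ν, a k = 0
  sum_eq_one : a.sum (fun _ t => t) = 1

namespace IsForwardConvexWeights

theorem single (ν : ℕ) : IsForwardConvexWeights ν (Finsupp.single ν 1) where
  nonneg k := by rw [single_apply]; split_ifs <;> norm_num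
  eq_zero_of_lt k hk := single_eq_of_ne hk.ne
  sum_eq_one := sum_single_index rfl

theorem mono {μ ν : ℕ} {a : ℕ →₀ ℝ} (ha : IsForwardConvexWeights ν a) (hμν : μ ≤ ν) :
    IsForwardConvexWeights μ a where
  nonneg := ha.nonneg
  eq_zero_of_lt k hk := ha.eq_zero_of_lt k (hk.trans_le hμν)
  sum_eq_one := ha.sum_eq_one

theorem convex (ν : ℕ) : Convex ℝ {a | IsForwardConvexWeights ν a} := by
  intro a ha b hb s t hs ht hst
  refine ⟨fun k => ?_, fun k hk => ?_, ?_⟩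
  · simp only [coe_add, coe_smul, Pi.add_apply, Pi.smul_apply, smul_eq_mul]
    have := ha.nonneg k; have := hb.nonneg k; positivity
  · simp [ha.eq_zero_of_lt k hk, hb.eq_zero_of_lt k hk]
  · rw [sum_add_index' (fun _ => rfl) (fun _ _ _ => rfl), sum_smul_index' (fun _ => rfl),
      sum_smul_index' (fun _ => rfl), ← smul_sum, ← smul_sum, ha.sum_eq_one, hb.sum_eq_one]
    simpa using hst

theorem linearCombination_mem {E : Type*} [AddCommGroup E] [Module ℝ E] {s : Set E}
    (hs : Convex ℝ s) {ν : ℕ} {a : ℕ →₀ ℝ} (ha : IsForwardConvexWeights ν a) {y : ℕ → E}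
    (hy : ∀ k, y k ∈ s) : linearCombination ℝ y a ∈ s :=
  hs.sum_mem (fun k _ => ha.nonneg k) ha.sum_eq_one fun k _ => hy k

end IsForwardConvexWeights

theorem exists_mem_forall_le_add {α : Type*} {s : Set α} (hs : s.Nonempty) {f : α → ℝ}
    (hf : BddBelow (f '' s)) {ε : ℝ} (hε : 0 < ε) : ∃ a ∈ s, ∀ b ∈ s, f a ≤ f b + ε := by
  obtain ⟨_, ⟨a, ha, rfl⟩, hlt⟩ :=
    exists_lt_of_csInf_lt (hs.image f) (lt_add_of_pos_right (sInf (f '' s)) hε)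
  exact ⟨a, ha, fun b hb => hlt.le.trans (by gcongr; exact csInf_le hf ⟨b, hb, rfl⟩)⟩

section InnerProductSpace

variable {H : Type*} [NormedAddCommGroup H] [InnerProductSpace ℝ H]

theorem parallelogram_law_midpoint (u v : H) :
    ‖u - v‖ ^ 2 = 2 * ‖u‖ ^ 2 + 2 * ‖v‖ ^ 2 - 4 * ‖(2⁻¹ : ℝ) • u + (2⁻¹ : ℝ) • v‖ ^ 2 := by
  have := parallelogram_law_with_norm ℝ u v
  rw [← smul_add, norm_smul, mul_pow]
  norm_num
  linarith

theorem cauchySeq_of_almost_minimal_norm {C : ℕ → Set H} (hC : Antitone C)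
    (hconv : ∀ ν, Convex ℝ (C ν)) {u : ℕ → H} (hu : ∀ ν, u ν ∈ C ν) {R : ℝ}
    (hR : ∀ ν, ‖u ν‖ ≤ R) {ε : ℕ → ℝ} (hε : Antitone ε) (hε0 : Tendsto ε atTop (𝓝 0))
    (hmin : ∀ ν, ∀ v ∈ C ν, ‖u ν‖ ^ 2 ≤ ‖v‖ ^ 2 + ε ν) : CauchySeq u := by
  set d : ℕ → ℝ := fun ν => sInf ((‖·‖ ^ 2) '' C ν)
  have hbdd : ∀ ν, BddBelow ((‖·‖ ^ 2) '' C ν) :=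
    fun ν => ⟨0, by rintro _ ⟨v, -, rfl⟩; positivity⟩
  have hd_le : ∀ ν, ∀ v ∈ C ν, d ν ≤ ‖v‖ ^ 2 := fun ν v hv => csInf_le (hbdd ν) ⟨v, hv, rfl⟩
  have hu_le : ∀ ν, ‖u ν‖ ^ 2 ≤ d ν + ε ν := fun ν => by
    have : ‖u ν‖ ^ 2 - ε ν ≤ d ν := le_csInf ⟨_, u ν, hu ν, rfl⟩ <| by
      rintro _ ⟨v, hv, rfl⟩; linarith [hmin ν v hv]
    linarith
  have hd_mono : Monotone d := fun μ ν h =>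
    csInf_le_csInf (hbdd μ) ⟨_, u ν, hu ν, rfl⟩ (Set.image_mono (hC h))
  have hd_bdd : BddAbove (Set.range d) := ⟨R ^ 2, by
    rintro _ ⟨ν, rfl⟩
    exact (hd_le ν _ (hu ν)).trans (pow_le_pow_left₀ (norm_nonneg _) (hR ν) 2)⟩
  set D := ⨆ ν, d ν
  have hdD : ∀ ν, d ν ≤ D := le_ciSup hd_bdd
  -- the midpoint of `u m` and `u n` lies in `C N`, so its norm is at least `d N`
  have key : ∀ m n N, N ≤ m → N ≤ n → ‖u m - u n‖ ^ 2 ≤ 4 * (D - d N) + 4 * ε N := by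
    intro m n N hm hn
    have hmid := hd_le N _ <| hconv N (hC hm (hu m)) (hC hn (hu n))
      (by norm_num : (0 : ℝ) ≤ 2⁻¹) (by norm_num : (0 : ℝ) ≤ 2⁻¹) (by norm_num)
    rw [parallelogram_law_midpoint]
    linarith [hu_le m, hu_le n, hdD m, hdD n, hε hm, hε hn]
  refine cauchySeq_of_le_tendsto_0 (fun N => √(4 * (D - d N) + 4 * ε N))
    (fun m n N hm hn => ?_) ?_
  · rw [dist_eq_norm]
    exact Real.le_sqrt_of_sq_le (key m n N hm hn)
  · have hlim : Tendsto (fun N => 4 * (D - d N) + 4 * ε N) atTop (𝓝 (4 * (D - D) + 4 * 0)) :=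
      ((tendsto_atTop_ciSup hd_mono hd_bdd).const_sub D |>.const_mul 4).add (hε0.const_mul 4)
    simpa [Function.comp_def] using (Real.continuous_sqrt.tendsto _).comp hlim

theorem exists_forwardConvex_tendsto [CompleteSpace H] {y : ℕ → H} {R : ℝ}
    (hy : ∀ ν, ‖y ν‖ ≤ R) :
    ∃ α : ℕ → ℕ →₀ ℝ, (∀ ν, IsForwardConvexWeights ν (α ν)) ∧
      ∃ w, Tendsto (fun ν => linearCombination ℝ y (α ν)) atTop (𝓝 w) := by
  set T := linearCombination ℝ y
  set W : ℕ → Set (ℕ →₀ ℝ) := fun ν => {a | IsForwardConvexWeights ν a}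
  have hnear : ∀ ν : ℕ, ∃ a ∈ W ν, ∀ b ∈ W ν, ‖T a‖ ^ 2 ≤ ‖T b‖ ^ 2 + 1 / (ν + 1) := fun ν =>
    exists_mem_forall_le_add ⟨_, .single ν⟩ ⟨0, by rintro _ ⟨b, -, rfl⟩; positivity⟩
      Nat.one_div_pos_of_nat
  choose α hα hmin using hnear
  refine ⟨α, hα, cauchySeq_tendsto_of_complete ?_⟩
  refine cauchySeq_of_almost_minimal_norm (C := fun ν => T '' W ν) (R := R)
    (ε := fun ν : ℕ => 1 / ((ν : ℝ) + 1)) ?anti ?convex ?mem ?bdd ?ε_anti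
    tendsto_one_div_add_atTop_nhds_zero_nat ?min
  case anti => exact fun μ ν h => Set.image_mono fun a ha => ha.mono h
  case convex => exact fun ν => (IsForwardConvexWeights.convex ν).linear_image T
  case mem => exact fun ν => ⟨α ν, hα ν, rfl⟩
  case bdd =>
    intro ν
    simpa using (hα ν).linearCombination_mem (convex_closedBall 0 R) (y := y) (by simpa using hy)
  case ε_anti => exact fun μ ν h => by dsimp only; gcongr
  case min =>
    rintro ν _ ⟨b, hb, rfl⟩
    exact hmin ν b hb

end InnerProductSpace

section Measure

variable {Ω : Type*} [MeasurableSpace Ω] {μ : Measure Ω}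

theorem MeasureTheory.MemLp.coeFn_linearCombination_toLp {ι E : Type*} [NormedAddCommGroup E]
    [NormedSpace ℝ E] {p : ENNReal} [Fact (1 ≤ p)] {y : ι → Ω → E} (hy : ∀ k, MemLp (y k) p μ)
    (a : ι →₀ ℝ) :
    ⇑(linearCombination ℝ (fun k => (hy k).toLp (y k)) a) =ᵐ[μ]
      fun ω => linearCombination ℝ (fun k => y k ω) a := by
  set L : (ι →₀ ℝ) →ₗ[ℝ] Lp E p μ := linearCombination ℝ fun k => (hy k).toLp (y k)
  induction a using Finsupp.induction_linear with
  | zero =>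
    simp only [map_zero]
    exact Lp.coeFn_zero E p μ
  | add f g hf hg =>
    rw [map_add]
    filter_upwards [Lp.coeFn_add (L f) (L g), hf, hg] with ω h hfω hgω
    rw [h, Pi.add_apply, hfω, hgω, map_add]
  | single k t =>
    rw [linearCombination_single]
    filter_upwards [Lp.coeFn_smul t ((hy k).toLp (y k)), (hy k).coeFn_toLp] with ω h hk
    rw [h, Pi.smul_apply, hk, linearCombination_single]

theorem exists_pos_mul_norm_le_one {F : Type*} [NormedAddCommGroup F] [MeasurableSpace F]
    [OpensMeasurableSpace F] {x : ℕ → Ω → F} (hx : ∀ ν, Measurable (x ν))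
    (hbd : ∀ᵐ ω ∂μ, ∃ M, ∀ ν, ‖x ν ω‖ ≤ M) :
    ∃ g : Ω → ℝ, Measurable g ∧ (∀ ω, 0 < g ω) ∧ ∀ᵐ ω ∂μ, ∀ ν, g ω * ‖x ν ω‖ ≤ 1 := by
  set S : Ω → ℝ := fun ω => ⨆ ν, ‖x ν ω‖
  have hS : ∀ ω, 0 ≤ S ω := fun ω => Real.iSup_nonneg fun ν => norm_nonneg _
  have hS_meas : Measurable S := Measurable.iSup fun ν => (hx ν).norm
  refine ⟨fun ω => (1 + S ω)⁻¹, (measurable_const.add hS_meas).inv,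
    fun ω => by have := hS ω; positivity, ?_⟩
  filter_upwards [hbd] with ω ⟨M, hM⟩ ν
  have hle : ‖x ν ω‖ ≤ S ω := le_ciSup ⟨M, by rintro _ ⟨k, rfl⟩; exact hM k⟩ ν
  rw [inv_mul_le_iff₀ (by linarith [hS ω])]
  linarith

section InnerProductSpace

variable {E : Type*} [NormedAddCommGroup E] [InnerProductSpace ℝ E] [CompleteSpace E]
  [MeasurableSpace E] [BorelSpace E]

theorem exists_forwardConvex_tendsto_ae_of_norm_le [IsFiniteMeasure μ] {y : ℕ → Ω → E}
    (hy : ∀ ν, AEStronglyMeasurable (y ν) μ) {R : ℝ} (hR : ∀ ν, ∀ᵐ ω ∂μ, ‖y ν ω‖ ≤ R) :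
    ∃ α : ℕ → ℕ →₀ ℝ, (∀ ν, IsForwardConvexWeights ν (α ν)) ∧ ∃ z : Ω → E, Measurable z ∧
      ∀ᵐ ω ∂μ, Tendsto (fun ν => linearCombination ℝ (fun k => y k ω) (α ν)) atTop (𝓝 (z ω)) := by
  have hR' : ∀ ν, ∀ᵐ ω ∂μ, ‖y ν ω‖ ≤ max R 0 := fun ν =>
    (hR ν).mono fun _ h => h.trans (le_max_left _ _)
  have hmem : ∀ ν, MemLp (y ν) 2 μ := fun ν => .of_bound (hy ν) _ (hR' ν)
  have hbdL : ∀ ν,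
      ‖(hmem ν).toLp (y ν)‖ ≤ measureUnivNNReal μ ^ (2 : ENNReal).toReal⁻¹ * max R 0 :=
    fun ν => Lp.norm_le_of_ae_bound (le_max_right _ _) <| by
      filter_upwards [(hmem ν).coeFn_toLp, hR' ν] with ω h hω
      rwa [h]
  obtain ⟨α, hα, w, hw⟩ := exists_forwardConvex_tendsto hbdL
  obtain ⟨ns, hns, hns_ae⟩ := (tendstoInMeasure_of_tendsto_Lp hw).exists_seq_tendsto_ae
  refine ⟨α ∘ ns, fun ν => (hα (ns ν)).mono hns.le_apply, w,
    (Lp.stronglyMeasurable w).measurable, ?_⟩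
  filter_upwards [hns_ae, ae_all_iff.2 fun ν => (MemLp.coeFn_linearCombination_toLp hmem (α ν))]
    with ω hω hcomb
  simpa only [Function.comp_apply, hcomb] using hω

theorem exists_forwardConvex_tendsto_ae [IsFiniteMeasure μ] [SecondCountableTopology E]
    {x : ℕ → Ω → E} (hx : ∀ ν, Measurable (x ν)) (hbd : ∀ᵐ ω ∂μ, ∃ M, ∀ ν, ‖x ν ω‖ ≤ M) :
    ∃ α : ℕ → ℕ →₀ ℝ, (∀ ν, IsForwardConvexWeights ν (α ν)) ∧ ∃ z : Ω → E, Measurable z ∧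
      ∀ᵐ ω ∂μ, Tendsto (fun ν => linearCombination ℝ (fun k => x k ω) (α ν)) atTop (𝓝 (z ω)) := by
  obtain ⟨g, hg, hg_pos, hgx⟩ := exists_pos_mul_norm_le_one hx hbd
  have hgx' : ∀ ν, ∀ᵐ ω ∂μ, ‖g ω • x ν ω‖ ≤ 1 := fun ν => by
    filter_upwards [hgx] with ω h
    rw [norm_smul, Real.norm_of_nonneg (hg_pos ω).le]
    exact h ν
  obtain ⟨α, hα, z, hz, hconv⟩ := exists_forwardConvex_tendsto_ae_of_norm_le
    (fun ν => (hg.smul (hx ν)).aestronglyMeasurable) hgx'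
  refine ⟨α, hα, fun ω => (g ω)⁻¹ • z ω, hg.inv.smul hz, ?_⟩
  filter_upwards [hconv] with ω h
  have hcomb : ∀ a : ℕ →₀ ℝ, linearCombination ℝ (fun k => g ω • x k ω) a =
      g ω • linearCombination ℝ (fun k => x k ω) a := fun a => by
    simp only [linearCombination_apply, smul_sum, smul_comm (g ω)]
  simpa only [Pi.smul_apply', hcomb, inv_smul_smul₀ (hg_pos ω).ne'] using h.const_smul (g ω)⁻¹

end InnerProductSpace

theorem exists_forwardConvex_tendsto_ae_of_finiteDimensional [IsFiniteMeasure μ] {F : Type*}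
    [NormedAddCommGroup F] [NormedSpace ℝ F] [FiniteDimensional ℝ F] [MeasurableSpace F]
    [BorelSpace F]
    {x : ℕ → Ω → F} (hx : ∀ ν, Measurable (x ν)) (hbd : ∀ᵐ ω ∂μ, ∃ M, ∀ ν, ‖x ν ω‖ ≤ M) :
    ∃ α : ℕ → ℕ →₀ ℝ, (∀ ν, IsForwardConvexWeights ν (α ν)) ∧ ∃ z : Ω → F, Measurable z ∧
      ∀ᵐ ω ∂μ, Tendsto (fun ν => linearCombination ℝ (fun k => x k ω) (α ν)) atTop (𝓝 (z ω)) := by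
  set e : F ≃L[ℝ] EuclideanSpace ℝ (Fin (Module.finrank ℝ F)) := toEuclidean
  have hbd' : ∀ᵐ ω ∂μ, ∃ M, ∀ ν, ‖e (x ν ω)‖ ≤ M := by
    filter_upwards [hbd] with ω ⟨M, hM⟩
    exact ⟨_, fun ν => e.toContinuousLinearMap.le_opNorm_of_le (hM ν)⟩
  obtain ⟨α, hα, z, hz, hconv⟩ :=
    exists_forwardConvex_tendsto_ae (fun ν => e.continuous.measurable.comp (hx ν)) hbd'
  refine ⟨α, hα, fun ω => e.symm (z ω), e.symm.continuous.measurable.comp hz, ?_⟩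
  filter_upwards [hconv] with ω h
  have hcomb : ∀ a : ℕ →₀ ℝ, e.symm (linearCombination ℝ (fun k => e (x k ω)) a) =
      linearCombination ℝ (fun k => x k ω) a := fun a => by
    simp only [linearCombination_apply, map_finsuppSum, map_smul, e.symm_apply_apply]
  simpa only [Function.comp_def, hcomb] using (e.symm.continuous.tendsto _).comp h

end Measure

/-- Komlós-type theorem, a.s.-bounded case: if `(x^ν)` is a sequence of
measurable `ℝ^n`-valued functions with `sup_ν |x^ν(ω)| < ∞` a.s., then there are forward
convex combinations `x̄^ν ∈ co{x^μ : μ ≥ ν}` converging a.s. to a measurable function. -/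
theorem stmt11 {Ω : Type*} [MeasurableSpace Ω] (μ : Measure Ω) [IsProbabilityMeasure μ]
    (n : ℕ) (x : ℕ → Ω → (Fin n → ℝ)) (hmeas : ∀ ν, Measurable (x ν))
    (hbd : ∀ᵐ ω ∂μ, ∃ M : ℝ, ∀ ν, ‖x ν ω‖ ≤ M) :
    ∃ α : ℕ → (ℕ →₀ ℝ), (∀ ν k, 0 ≤ α ν k) ∧ (∀ ν k, k < ν → α ν k = 0) ∧
      (∀ ν, (α ν).sum (fun _ a => a) = 1) ∧
      ∃ z : Ω → (Fin n → ℝ), Measurable z ∧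
        ∀ᵐ ω ∂μ, Tendsto (fun ν => (α ν).sum (fun k a => a • x k ω)) atTop (nhds (z ω)) := by
  obtain ⟨α, hα, z, hz, hconv⟩ := exists_forwardConvex_tendsto_ae_of_finiteDimensional hmeas hbd
  refine ⟨α, fun ν => (hα ν).nonneg, fun ν => (hα ν).eq_zero_of_lt, fun ν => (hα ν).sum_eq_one,
    z, hz, ?_⟩
  simpa only [linearCombination_apply] using hconv
end

section
/- Let C : Ω ⇒ ℝ^n be a measurable closed-valued nonempty-valued mapping into closed linear-subspace candidates (each C(ω) is a closed set containing 0 that is closed under nonnegative scaling). Then C(ω) is a linear subspace for almost every ω if and only if the set of measurable selectors {x measurable : x(ω) ∈ C(ω) a.s.} is closed under negation (i.e., forms a linear space under pointwise operations). -/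
/-!
If selectors are closed under negation, then for every point `p` the measurable selector of
nearest points `x ω ∈ C ω` to `p` yields `-x ω ∈ C ω`, hence `infDist (-p) (C ω) ≤ infDist p (C ω)`
almost surely. Over a countable dense set of `p` this holds simultaneously, so by continuity for
all `p`, and taking `p ∈ C ω` shows that `C ω` is symmetric. A symmetric convex cone is a subspace.

Nearest points are taken for the Euclidean norm: by the parallelogram law, near-minimisers of the
distance to a convex set are close to each other, so the nearest point is the pointwise limit of
countably-valued approximate minimisers, hence measurable.
-/

open MeasureTheory Metric Filter Topology

section NearestPoint

variable {E : Type*} [NormedAddCommGroup E] [InnerProductSpace ℝ E]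

theorem Convex.four_mul_infDist_sq_add_dist_sq_le {K : Set E} (hK : Convex ℝ K) {u v : E}
    (hu : u ∈ K) (hv : v ∈ K) (p : E) :
    4 * infDist p K ^ 2 + dist u v ^ 2 ≤ 2 * (dist p u ^ 2 + dist p v ^ 2) := by
  have hmid : (1 / 2 : ℝ) • u + (1 / 2 : ℝ) • v ∈ K := hK hu hv (by norm_num) (by norm_num) (by norm_num)
  have hle : 2 * infDist p K ≤ ‖(u - p) + (v - p)‖ := by
    rw [show (u - p) + (v - p) = (2 : ℝ) • ((1 / 2 : ℝ) • u + (1 / 2 : ℝ) • v - p) by module,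
      norm_smul, Real.norm_two, ← dist_eq_norm, dist_comm]
    gcongr
    exact infDist_le_dist_of_mem hmid
  have hpar := parallelogram_law_with_norm ℝ (u - p) (v - p)
  rw [sub_sub_sub_cancel_right, ← dist_eq_norm, ← dist_eq_norm, ← dist_eq_norm, dist_comm u p,
    dist_comm v p] at hpar
  have hsq := pow_le_pow_left₀ (mul_nonneg zero_le_two infDist_nonneg) hle 2
  linarith [mul_pow 2 (infDist p K) 2]

theorem Convex.tendsto_of_tendsto_dist_infDist {K : Set E} (hK : Convex ℝ K) {p z : E}
    (hz : z ∈ K) (hpz : dist p z = infDist p K) {u : ℕ → E} (hu : ∀ k, u k ∈ K)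
    (h : Tendsto (fun k => dist p (u k)) atTop (𝓝 (infDist p K))) :
    Tendsto u atTop (𝓝 z) := by
  rw [tendsto_iff_dist_tendsto_zero]
  have hbound : ∀ k, dist (u k) z ≤ √(2 * (dist p (u k) ^ 2 - infDist p K ^ 2)) := fun k => by
    refine Real.le_sqrt_of_sq_le ?_
    have := hK.four_mul_infDist_sq_add_dist_sq_le (hu k) hz p
    rw [hpz] at this
    linarith
  have hlim : Tendsto (fun k => √(2 * (dist p (u k) ^ 2 - infDist p K ^ 2))) atTop (𝓝 0) := by
    have := (((h.pow 2).sub_const (infDist p K ^ 2)).const_mul 2).sqrt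
    rwa [sub_self, mul_zero, Real.sqrt_zero] at this
  exact squeeze_zero (fun _ => dist_nonneg) hbound hlim

theorem Convex.tendsto_of_infDist_lt {K : Set E} (hK : Convex ℝ K) {p z : E} (hz : z ∈ K)
    (hpz : dist p z = infDist p K) {y : ℕ → E} {ε : ℕ → ℝ} (hε : Tendsto ε atTop (𝓝 0))
    (hyK : ∀ k, infDist (y k) K < ε k) (hyp : ∀ k, dist p (y k) < infDist p K + ε k) :
    Tendsto y atTop (𝓝 z) := by
  choose u hu hyu using fun k => (infDist_lt_iff ⟨z, hz⟩).1 (hyK k)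
  have hup : Tendsto (fun k => dist p (u k)) atTop (𝓝 (infDist p K)) := by
    refine tendsto_of_tendsto_of_tendsto_of_le_of_le tendsto_const_nhds
      (by simpa using tendsto_const_nhds.add (hε.const_mul 2)) (fun k => infDist_le_dist_of_mem (hu k))
      fun k => ?_
    linarith [dist_triangle p (y k) (u k), hyu k, hyp k]
  refine (hK.tendsto_of_tendsto_dist_infDist hz hpz hu hup).congr_dist ?_
  refine squeeze_zero (fun _ => dist_nonneg) (fun k => ?_) hε
  rw [dist_comm]
  exact (hyu k).le

theorem Convex.exists_dist_eq_infDist [CompleteSpace E] {K : Set E} (hK : Convex ℝ K)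
    (hclosed : IsClosed K) (hne : K.Nonempty) (p : E) : ∃ z ∈ K, dist p z = infDist p K := by
  obtain ⟨z, hz, hpz⟩ := exists_norm_eq_iInf_of_complete_convex hne hclosed.isComplete hK p
  exact ⟨z, hz, by simpa only [infDist_eq_iInf, dist_eq_norm] using hpz⟩

end NearestPoint

section MeasurableSelector

variable {Ω : Type*} [MeasurableSpace Ω]

theorem measurable_infDist_of_measurableSet_nonempty_inter {α : Type*} [PseudoMetricSpace α]
    {C : Ω → Set α} (hne : ∀ ω, (C ω).Nonempty)
    (hmeas : ∀ U : Set α, IsOpen U → MeasurableSet {ω | (C ω ∩ U).Nonempty}) (y : α) :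
    Measurable fun ω => infDist y (C ω) := by
  refine measurable_of_Iio fun r => ?_
  convert hmeas (ball y r) isOpen_ball using 1
  ext ω
  simp only [Set.mem_preimage, Set.mem_Iio, infDist_lt_iff (hne ω)]
  exact ⟨fun ⟨z, hz, hd⟩ => ⟨z, hz, by rwa [mem_ball, dist_comm]⟩,
    fun ⟨z, hz, hd⟩ => ⟨z, hz, by rwa [mem_ball, dist_comm] at hd⟩⟩

theorem measurableSet_nonempty_inter_preimage {X Y : Type*} [TopologicalSpace X]
    [TopologicalSpace Y] {C : Ω → Set Y}
    (hmeas : ∀ U : Set Y, IsOpen U → MeasurableSet {ω | (C ω ∩ U).Nonempty}) (Φ : X ≃ₜ Y)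
    {U : Set X} (hU : IsOpen U) : MeasurableSet {ω | (Φ ⁻¹' C ω ∩ U).Nonempty} := by
  convert hmeas (Φ '' U) (Φ.isOpen_image.2 hU) using 1
  ext ω
  rw [Set.mem_ofPred_eq, Set.mem_ofPred_eq, ← Set.image_nonempty (f := Φ), Set.inter_comm _ U,
    Set.image_inter_preimage, Set.inter_comm]

variable {E : Type*} [NormedAddCommGroup E] [InnerProductSpace ℝ E] [CompleteSpace E]
  [TopologicalSpace.SeparableSpace E] [MeasurableSpace E] [BorelSpace E] {C : Ω → Set E}

theorem exists_measurable_dist_eq_infDist (hclosed : ∀ ω, IsClosed (C ω))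
    (hne : ∀ ω, (C ω).Nonempty) (hconv : ∀ ω, Convex ℝ (C ω))
    (hdist : ∀ y, Measurable fun ω => infDist y (C ω)) (p : E) :
    ∃ x : Ω → E, Measurable x ∧ ∀ ω, x ω ∈ C ω ∧ dist p (x ω) = infDist p (C ω) := by
  classical
  choose z hz hpz using fun ω => (hconv ω).exists_dist_eq_infDist (hclosed ω) (hne ω) p
  obtain ⟨e, he⟩ := TopologicalSpace.exists_dense_seq E
  set ε : ℕ → ℝ := fun k => 1 / (k + 1)
  have hex : ∀ ω k, ∃ i, infDist (e i) (C ω) < ε k ∧ dist p (e i) < infDist p (C ω) + ε k := by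
    intro ω k
    obtain ⟨i, hi⟩ := he.exists_dist_lt (z ω) (Nat.one_div_pos_of_nat (n := k))
    refine ⟨i, (infDist_le_dist_of_mem (hz ω)).trans_lt (by rwa [dist_comm]), ?_⟩
    linarith [dist_triangle p (z ω) (e i), hpz ω]
  set y : ℕ → Ω → E := fun k ω => e (Nat.find (hex ω k))
  have hym : ∀ k, Measurable (y k) := fun k =>
    measurable_from_top.comp <| measurable_find (fun ω => hex ω k) fun i =>
      (measurableSet_lt (hdist (e i)) measurable_const).inter
        (measurableSet_lt measurable_const ((hdist p).add_const _))
  have hyz : ∀ ω, Tendsto (fun k => y k ω) atTop (𝓝 (z ω)) := fun ω =>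
    (hconv ω).tendsto_of_infDist_lt (hz ω) (hpz ω) tendsto_one_div_add_atTop_nhds_zero_nat
      (fun k => (Nat.find_spec (hex ω k)).1) fun k => (Nat.find_spec (hex ω k)).2
  exact ⟨z, measurable_of_tendsto_metrizable hym (tendsto_pi_nhds.2 hyz), fun ω => ⟨hz ω, hpz ω⟩⟩

theorem ae_neg_mem_of_forall_selector (μ : Measure Ω) (hclosed : ∀ ω, IsClosed (C ω))
    (hne : ∀ ω, (C ω).Nonempty) (hconv : ∀ ω, Convex ℝ (C ω))
    (hmeas : ∀ U : Set E, IsOpen U → MeasurableSet {ω | (C ω ∩ U).Nonempty})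
    (h : ∀ x : Ω → E, Measurable x → (∀ᵐ ω ∂μ, x ω ∈ C ω) → ∀ᵐ ω ∂μ, -x ω ∈ C ω) :
    ∀ᵐ ω ∂μ, ∀ y ∈ C ω, -y ∈ C ω := by
  have hdist := measurable_infDist_of_measurableSet_nonempty_inter hne hmeas
  have hsymm : ∀ p, ∀ᵐ ω ∂μ, infDist (-p) (C ω) ≤ infDist p (C ω) := fun p => by
    obtain ⟨x, hxm, hx⟩ := exists_measurable_dist_eq_infDist hclosed hne hconv hdist p
    filter_upwards [h x hxm (.of_forall fun ω => (hx ω).1)] with ω hneg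
    calc infDist (-p) (C ω) ≤ dist (-p) (-x ω) := infDist_le_dist_of_mem hneg
      _ = infDist p (C ω) := by rw [dist_neg_neg, (hx ω).2]
  obtain ⟨e, he⟩ := TopologicalSpace.exists_dense_seq E
  filter_upwards [ae_all_iff.2 fun i => hsymm (e i)] with ω hω y hy
  have hyy : infDist (-y) (C ω) ≤ infDist y (C ω) :=
    he.induction_on y (isClosed_le ((continuous_infDist_pt _).comp continuous_neg)
      (continuous_infDist_pt _)) hω
  rw [infDist_zero_of_mem hy] at hyy
  exact ((hclosed ω).mem_iff_infDist_zero (hne ω)).2 (le_antisymm hyy infDist_nonneg)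

end MeasurableSelector

theorem exists_submodule_eq_of_neg_mem {V : Type*} [AddCommGroup V] [Module ℝ V] {s : Set V}
    (hzero : 0 ∈ s) (hconv : Convex ℝ s) (hcone : ∀ y ∈ s, ∀ l : ℝ, 0 ≤ l → l • y ∈ s)
    (hneg : ∀ y ∈ s, -y ∈ s) : ∃ W : Submodule ℝ V, s = W := by
  refine ⟨⟨⟨⟨s, ?_⟩, hzero⟩, ?_⟩, rfl⟩
  · intro a b ha hb
    have hmid : (1 / 2 : ℝ) • a + (1 / 2 : ℝ) • b ∈ s :=
      hconv ha hb (by norm_num) (by norm_num) (by norm_num)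
    convert hcone _ hmid 2 zero_le_two using 1
    module
  · intro c y hy
    rcases le_or_gt 0 c with hc | hc
    · exact hcone y hy c hc
    · simpa using hcone (-y) (hneg y hy) (-c) (by linarith)

theorem stmt15_general {Ω : Type*} [F : MeasurableSpace Ω] (μ : Measure Ω)
    (n : ℕ) (C : Ω → Set (Fin n → ℝ))
    (hclosed : ∀ ω, IsClosed (C ω)) (hzero : ∀ ω, (0 : Fin n → ℝ) ∈ C ω)
    (hconv : ∀ ω, Convex ℝ (C ω))
    (hcone : ∀ ω, ∀ y ∈ C ω, ∀ l : ℝ, 0 ≤ l → l • y ∈ C ω)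
    (hmeas : ∀ U : Set (Fin n → ℝ), IsOpen U → MeasurableSet {ω | (C ω ∩ U).Nonempty}) :
    (∀ᵐ ω ∂μ, ∃ W : Submodule ℝ (Fin n → ℝ), C ω = (W : Set (Fin n → ℝ))) ↔
    (∀ x : Ω → (Fin n → ℝ), Measurable x → (∀ᵐ ω ∂μ, x ω ∈ C ω) →
      ∀ᵐ ω ∂μ, -(x ω) ∈ C ω) := by
  constructor
  · intro hW x _ hx
    filter_upwards [hW, hx] with ω ⟨W, hW⟩ hxω
    rw [hW] at hxω ⊢
    exact W.neg_mem hxω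
  · intro h
    let Φ := EuclideanSpace.equiv (Fin n) ℝ
    have hsymm : ∀ᵐ ω ∂μ, ∀ y ∈ Φ ⁻¹' C ω, -y ∈ Φ ⁻¹' C ω :=
      ae_neg_mem_of_forall_selector μ (fun ω => (hclosed ω).preimage Φ.continuous)
        (fun ω => ⟨0, by simpa using hzero ω⟩) (fun ω => (hconv ω).linear_preimage Φ.toLinearMap)
        (fun U hU => measurableSet_nonempty_inter_preimage hmeas Φ.toHomeomorph hU)
        fun x hxm hx => by simpa using h (Φ ∘ x) (Φ.continuous.measurable.comp hxm) hx
    filter_upwards [hsymm] with ω hω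
    refine exists_submodule_eq_of_neg_mem (hzero ω) (hconv ω) (hcone ω) fun y hy => ?_
    simpa using hω (Φ.symm y) (by simpa using hy)

/-- a measurable, closed-convex-valued mapping `C` whose values contain `0`
and are closed under nonnegative scaling is a.s. linear-subspace-valued iff its set of
measurable selectors is a linear space (equivalently, closed under negation). -/
theorem stmt15 {Ω : Type*} [F : MeasurableSpace Ω] (μ : Measure Ω) [IsProbabilityMeasure μ]
    (n : ℕ) (C : Ω → Set (Fin n → ℝ))
    (hclosed : ∀ ω, IsClosed (C ω)) (hzero : ∀ ω, (0 : Fin n → ℝ) ∈ C ω)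
    (hconv : ∀ ω, Convex ℝ (C ω))
    (hcone : ∀ ω, ∀ y ∈ C ω, ∀ l : ℝ, 0 ≤ l → l • y ∈ C ω)
    (hmeas : ∀ U : Set (Fin n → ℝ), IsOpen U → MeasurableSet {ω | (C ω ∩ U).Nonempty}) :
    (∀ᵐ ω ∂μ, ∃ W : Submodule ℝ (Fin n → ℝ), C ω = (W : Set (Fin n → ℝ))) ↔
    (∀ x : Ω → (Fin n → ℝ), Measurable x → (∀ᵐ ω ∂μ, x ω ∈ C ω) →
      ∀ᵐ ω ∂μ, -(x ω) ∈ C ω) :=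
  stmt15_general (F := F) μ n C hclosed hzero hconv hcone hmeas
end
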